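/- Let X be a finite-dimensional real Banach space and let F : [0,1] → 2^X \ {∅} be a bounded multifunction. Then I(F) is nonempty. -/

import Mathlib

open Pointwise Filter Metric Set

/-- A tagged partition of `[0,1]` into finitely many segments with tags. -/
structure TaggedPartition where
  n : ℕ
  pt : Fin (n + 1) → ℝ
  tag : Fin n → ℝ
  pt_zero : pt 0 = 0
  pt_last : pt (Fin.last n) = 1
  pt_mono : Monotone pt
  tag_mem : ∀ i : Fin n, tag i ∈ Set.Icc (pt i.castSucc) (pt i.succ)

/-- The diameter (mesh) of a tagged partition. -/
noncomputable def TaggedPartition.mesh (P : TaggedPartition) : ℝ :=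
  ⨆ i : Fin P.n, (P.pt i.succ - P.pt i.castSucc)

/-- Riemann integral sum of a multifunction, using Minkowski sums and
pointwise scalar multiples of sets. -/
noncomputable def msum {X : Type*} [NormedAddCommGroup X] [NormedSpace ℝ X]
    (F : ℝ → Set X) (P : TaggedPartition) : Set X :=
  ∑ i : Fin P.n, (P.pt i.succ - P.pt i.castSucc) • F (P.tag i)

/-- The set `I(F)` of limits of Riemann integral sums of a multifunction `F`:
all closed nonempty subsets that are Hausdorff-distance limits of sequences of Riemann
sums along sequences of tagged partitions whose diameters tend to `0`. -/
def limitSets {X : Type*} [NormedAddCommGroup X] [NormedSpace ℝ X]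
    (F : ℝ → Set X) : Set (Set X) :=
  {A | A.Nonempty ∧ IsClosed A ∧ ∃ P : ℕ → TaggedPartition,
    Tendsto (fun k => (P k).mesh) atTop (nhds 0) ∧
    Tendsto (fun k => EMetric.hausdorffEdist (msum F (P k)) A) atTop (nhds 0)}

/-!
Every Riemann sum of `F` is nonempty and, since the segment lengths add up to `1`, lies in the
closed ball of radius `M`, any bound for `‖F‖`. In finite dimension that ball is compact, so its
nonempty compact subsets form a compact space for the Hausdorff metric (Blaschke selection).
Along the uniform partitions, whose mesh `1 / (k + 1)` tends to `0`, the closures of the Riemann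
sums therefore have a Hausdorff-convergent subsequence, and its limit lies in `I(F)`.
-/

theorem Fin.sum_succ_sub_castSucc {M : Type*} [AddCommGroup M] :
    ∀ {n : ℕ} (f : Fin (n + 1) → M),
      ∑ i : Fin n, (f i.succ - f i.castSucc) = f (Fin.last n) - f 0
  | 0, f => by simp
  | n + 1, f => by
    have h := Fin.sum_succ_sub_castSucc (fun i => f i.castSucc)
    simp only [← Fin.succ_castSucc] at h
    rw [Fin.sum_univ_castSucc, h]
    simp

open TopologicalSpace in
theorem exists_subseq_tendsto_hausdorffEDist {α : Type*} [EMetricSpace α] {B : Set α}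
    (hB : IsCompact B) {s : ℕ → Set α} (hsB : ∀ k, s k ⊆ B) (hs : ∀ k, (s k).Nonempty) :
    ∃ A : Set α, A.Nonempty ∧ IsClosed A ∧ ∃ φ : ℕ → ℕ, StrictMono φ ∧
      Tendsto (fun j => hausdorffEDist (s (φ j)) A) atTop (nhds 0) := by
  have := isCompact_iff_compactSpace.mp hB
  let K (k : ℕ) : NonemptyCompacts B :=
    ⟨⟨closure (Subtype.val ⁻¹' s k), isClosed_closure.isCompact⟩,
      let ⟨x, hx⟩ := hs k; ⟨⟨x, hsB k hx⟩, subset_closure hx⟩⟩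
  obtain ⟨L, -, φ, hφ, hL⟩ := isCompact_univ.tendsto_subseq fun k => mem_univ (K k)
  have hK : ∀ k, hausdorffEDist (s k) (Subtype.val '' (L : Set B)) = edist (K k) L := fun k => by
    change _ = hausdorffEDist (closure (Subtype.val ⁻¹' s k)) (L : Set B)
    rw [← hausdorffEDist_image isometry_subtype_coe,
      ← hB.isClosed.isClosedEmbedding_subtypeVal.closure_image_eq, Subtype.image_preimage_coe,
      inter_eq_self_of_subset_right (hsB k), hausdorffEDist_closure_left]
  refine ⟨Subtype.val '' (L : Set B), L.nonempty.image _,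
    (L.isCompact.image continuous_subtype_val).isClosed, φ, hφ, ?_⟩
  simpa only [hK, Function.comp_def] using tendsto_iff_edist_tendsto_0.mp hL

namespace TaggedPartition

theorem sum_length (P : TaggedPartition) :
    ∑ i : Fin P.n, (P.pt i.succ - P.pt i.castSucc) = 1 := by
  rw [Fin.sum_succ_sub_castSucc, P.pt_last, P.pt_zero, sub_zero]

theorem length_nonneg (P : TaggedPartition) (i : Fin P.n) :
    0 ≤ P.pt i.succ - P.pt i.castSucc :=
  sub_nonneg.mpr (P.pt_mono i.castSucc_le_succ)

theorem tag_mem_Icc (P : TaggedPartition) (i : Fin P.n) : P.tag i ∈ Icc (0 : ℝ) 1 :=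
  ⟨P.pt_zero ▸ (P.pt_mono (Fin.zero_le _)).trans (P.tag_mem i).1,
    (P.tag_mem i).2.trans (P.pt_last ▸ P.pt_mono (Fin.le_last _))⟩

noncomputable def uniform (k : ℕ) : TaggedPartition where
  n := k + 1
  pt i := (i : ℕ) / (k + 1)
  tag i := (i : ℕ) / (k + 1)
  pt_zero := by simp
  pt_last := by
    simp only [Fin.val_last, Nat.cast_add_one]
    exact div_self k.cast_add_one_ne_zero
  pt_mono i j hij := by dsimp only; gcongr; exact hij
  tag_mem i := ⟨by simp, by simp only [Fin.val_succ]; gcongr; linarith⟩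

theorem uniform_length (k : ℕ) (i : Fin (k + 1)) :
    (uniform k).pt i.succ - (uniform k).pt i.castSucc = 1 / (k + 1) := by
  simp only [uniform, Fin.val_succ, Fin.val_castSucc]
  push_cast
  ring

theorem uniform_mesh (k : ℕ) : (uniform k).mesh = 1 / (k + 1) :=
  (iSup_congr (uniform_length k)).trans ciSup_const

end TaggedPartition

section RiemannSum

variable {X : Type*} [NormedAddCommGroup X] [NormedSpace ℝ X] (F : ℝ → Set X)
  (P : TaggedPartition)

theorem msum_nonempty (hF : ∀ t ∈ Icc (0 : ℝ) 1, (F t).Nonempty) : (msum F P).Nonempty :=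
  Finset.sum_induction _ Set.Nonempty (fun _ _ => .add) ⟨0, rfl⟩
    fun i _ => (hF _ (P.tag_mem_Icc i)).smul_set

theorem msum_subset_closedBall {M : ℝ} (hF : ∀ t ∈ Icc (0 : ℝ) 1, ∀ a ∈ F t, ‖a‖ ≤ M) :
    msum F P ⊆ closedBall 0 M := by
  intro x hx
  obtain ⟨g, hg, rfl⟩ := (mem_finsetSum _ _ _).mp hx
  rw [mem_closedBall_zero_iff]
  calc ‖∑ i, g i‖ ≤ ∑ i, ‖g i‖ := norm_sum_le _ _
    _ ≤ ∑ i : Fin P.n, (P.pt i.succ - P.pt i.castSucc) * M := by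
        refine Finset.sum_le_sum fun i _ => ?_
        obtain ⟨a, ha, hga⟩ := hg (Finset.mem_univ i)
        rw [← hga, norm_smul, Real.norm_of_nonneg (P.length_nonneg i)]
        exact mul_le_mul_of_nonneg_left (hF _ (P.tag_mem_Icc i) a ha) (P.length_nonneg i)
    _ = M := by rw [← Finset.sum_mul, P.sum_length, one_mul]

end RiemannSum

/-- For a bounded multifunction on `[0,1]` with values in a finite-dimensional real
Banach space, `I(F)` is nonempty. -/
theorem limitSets_nonempty_of_finiteDimensional
    {X : Type*} [NormedAddCommGroup X] [NormedSpace ℝ X] [FiniteDimensional ℝ X]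
    (F : ℝ → Set X)
    (hFne : ∀ t ∈ Set.Icc (0 : ℝ) 1, (F t).Nonempty)
    (hFbdd : ∃ M : ℝ, ∀ t ∈ Set.Icc (0 : ℝ) 1, ∀ a ∈ F t, ‖a‖ ≤ M) :
    (limitSets F).Nonempty := by
  obtain ⟨M, hM⟩ := hFbdd
  obtain ⟨A, hAne, hAcl, φ, hφ, hA⟩ := exists_subseq_tendsto_hausdorffEDist
    (isCompact_closedBall (0 : X) M)
    (fun k => msum_subset_closedBall F (TaggedPartition.uniform k) hM)
    (fun k => msum_nonempty F (TaggedPartition.uniform k) hFne)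
  refine ⟨A, hAne, hAcl, fun j => TaggedPartition.uniform (φ j), ?_, hA⟩
  simp only [TaggedPartition.uniform_mesh]
  exact tendsto_one_div_add_atTop_nhds_zero_nat.comp hφ.tendsto_atTop
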